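/- arXiv:2001.08471 — 9 statements merged into one kernel-verified Lean document; each statement's English description precedes it below -/
import Mathlib

section
/- For positive real numbers a ≥ b ≥ c > 0, setting σ₁ = a² + b² + c², σ₂ = a²b² + a²c² + b²c², and β = σ₁ − √(σ₁² − 3σ₂), one has b² + c² < β ≤ (3/2)(b² + c²), and the second inequality is an equality if and only if b = c. -/
/-- For positive reals `a ≥ b ≥ c > 0`, setting `σ₁ = a²+b²+c²`, `σ₂ = a²b²+a²c²+b²c²`,
`β = σ₁ − √(σ₁² − 3σ₂)`, one has `b² + c² < β ≤ (3/2)(b²+c²)`, with equality on the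
right iff `b = c`. -/
theorem stmt_0 (a b c β : ℝ) (hc : 0 < c) (hcb : c ≤ b) (hba : b ≤ a)
    (hβ : β = (a ^ 2 + b ^ 2 + c ^ 2) -
      Real.sqrt ((a ^ 2 + b ^ 2 + c ^ 2) ^ 2 -
        3 * (a ^ 2 * b ^ 2 + a ^ 2 * c ^ 2 + b ^ 2 * c ^ 2))) :
    b ^ 2 + c ^ 2 < β ∧ β ≤ (3 / 2) * (b ^ 2 + c ^ 2) ∧
      (β = (3 / 2) * (b ^ 2 + c ^ 2) ↔ b = c) := by
  have hb : 0 < b := hc.trans_le hcb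
  have ha : 0 < a := hb.trans_le hba
  have hD0 : 0 ≤ (a ^ 2 + b ^ 2 + c ^ 2) ^ 2 -
      3 * (a ^ 2 * b ^ 2 + a ^ 2 * c ^ 2 + b ^ 2 * c ^ 2) := by
    nlinarith [sq_nonneg (a^2 - b^2), sq_nonneg (a^2 - c^2), sq_nonneg (b^2 - c^2)]
  obtain ⟨s, hsd⟩ : ∃ s : ℝ, s = Real.sqrt ((a ^ 2 + b ^ 2 + c ^ 2) ^ 2 -
      3 * (a ^ 2 * b ^ 2 + a ^ 2 * c ^ 2 + b ^ 2 * c ^ 2)) := ⟨_, rfl⟩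
  rw [← hsd] at hβ
  have hs0 : 0 ≤ s := hsd ▸ Real.sqrt_nonneg _
  have hs2 : s ^ 2 = (a ^ 2 + b ^ 2 + c ^ 2) ^ 2 -
      3 * (a ^ 2 * b ^ 2 + a ^ 2 * c ^ 2 + b ^ 2 * c ^ 2) := hsd ▸ Real.sq_sqrt hD0
  have h1 : s < a ^ 2 := by
    rw [hsd, Real.sqrt_lt' (by positivity)]
    nlinarith [mul_pos (mul_pos hb hb) (mul_pos hc hc),
      mul_nonneg (show (0:ℝ) ≤ a^2 - b^2 by nlinarith) (sq_nonneg b),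
      mul_nonneg (show (0:ℝ) ≤ a^2 - c^2 by nlinarith) (sq_nonneg c)]
  have hx0 : 0 ≤ a ^ 2 - (b ^ 2 + c ^ 2) / 2 := by nlinarith
  have h2 : a ^ 2 - (b ^ 2 + c ^ 2) / 2 ≤ s := by
    rw [hsd, Real.le_sqrt hx0 hD0]
    nlinarith [sq_nonneg (b^2 - c^2)]
  refine ⟨by linarith, by linarith, ?_, ?_⟩
  · intro heq
    have hseq : s = a ^ 2 - (b ^ 2 + c ^ 2) / 2 := by linarith
    rw [hseq] at hs2
    have hbc2 : (b ^ 2 - c ^ 2) ^ 2 = 0 := by linear_combination (-4/3 : ℝ) * hs2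
    have hbc : b ^ 2 = c ^ 2 := by
      have := pow_eq_zero_iff (n := 2) (by norm_num) |>.mp hbc2
      linarith
    have hble : b ≤ c := by nlinarith
    linarith
  · intro heq
    subst heq
    have : s = a ^ 2 - b ^ 2 := by
      rw [hsd, show (a ^ 2 + b ^ 2 + b ^ 2) ^ 2 -
        3 * (a ^ 2 * b ^ 2 + a ^ 2 * b ^ 2 + b ^ 2 * b ^ 2) = (a ^ 2 - b ^ 2) ^ 2 by ring,
        Real.sqrt_sq (by nlinarith)]
    rw [hβ, this]; ring
end

section
/- For real numbers a ≥ b ≥ c > 0, the minimum of the five values 4a² + 16b² + 4c², 4a² + 4b² + 16c², 16a² + 4b² + 4c², 8(a²+b²+c²) + 8√(a⁴+b⁴+c⁴−a²b²−a²c²−b²c²), and 8(a²+b²+c²) − 8√(a⁴+b⁴+c⁴−a²b²−a²c²−b²c²) equals 8(a²+b²+c²) − 8√(a⁴+b⁴+c⁴−a²b²−a²c²−b²c²). Moreover this minimum is attained only by the last value if and only if a > b. -/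
set_option maxHeartbeats 1000000


/-- For reals `a ≥ b ≥ c > 0`, the minimum of the five listed values equals
`8(a²+b²+c²) − 8√(a⁴+b⁴+c⁴−a²b²−a²c²−b²c²)`, and this minimum is attained only by
the last value if and only if `a > b`. -/
theorem stmt_1 (a b c : ℝ) (hc : 0 < c) (hcb : c ≤ b) (hba : b ≤ a) :
    min (min (min (min (4 * a ^ 2 + 16 * b ^ 2 + 4 * c ^ 2)
            (4 * a ^ 2 + 4 * b ^ 2 + 16 * c ^ 2))
          (16 * a ^ 2 + 4 * b ^ 2 + 4 * c ^ 2))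
        (8 * (a ^ 2 + b ^ 2 + c ^ 2) +
          8 * Real.sqrt (a ^ 4 + b ^ 4 + c ^ 4 - a ^ 2 * b ^ 2 - a ^ 2 * c ^ 2 - b ^ 2 * c ^ 2)))
      (8 * (a ^ 2 + b ^ 2 + c ^ 2) -
        8 * Real.sqrt (a ^ 4 + b ^ 4 + c ^ 4 - a ^ 2 * b ^ 2 - a ^ 2 * c ^ 2 - b ^ 2 * c ^ 2))
      = 8 * (a ^ 2 + b ^ 2 + c ^ 2) -
        8 * Real.sqrt (a ^ 4 + b ^ 4 + c ^ 4 - a ^ 2 * b ^ 2 - a ^ 2 * c ^ 2 - b ^ 2 * c ^ 2) ∧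
    ((8 * (a ^ 2 + b ^ 2 + c ^ 2) -
        8 * Real.sqrt (a ^ 4 + b ^ 4 + c ^ 4 - a ^ 2 * b ^ 2 - a ^ 2 * c ^ 2 - b ^ 2 * c ^ 2)
          < 4 * a ^ 2 + 16 * b ^ 2 + 4 * c ^ 2 ∧
      8 * (a ^ 2 + b ^ 2 + c ^ 2) -
        8 * Real.sqrt (a ^ 4 + b ^ 4 + c ^ 4 - a ^ 2 * b ^ 2 - a ^ 2 * c ^ 2 - b ^ 2 * c ^ 2)
          < 4 * a ^ 2 + 4 * b ^ 2 + 16 * c ^ 2 ∧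
      8 * (a ^ 2 + b ^ 2 + c ^ 2) -
        8 * Real.sqrt (a ^ 4 + b ^ 4 + c ^ 4 - a ^ 2 * b ^ 2 - a ^ 2 * c ^ 2 - b ^ 2 * c ^ 2)
          < 16 * a ^ 2 + 4 * b ^ 2 + 4 * c ^ 2 ∧
      8 * (a ^ 2 + b ^ 2 + c ^ 2) -
        8 * Real.sqrt (a ^ 4 + b ^ 4 + c ^ 4 - a ^ 2 * b ^ 2 - a ^ 2 * c ^ 2 - b ^ 2 * c ^ 2)
          < 8 * (a ^ 2 + b ^ 2 + c ^ 2) +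
            8 * Real.sqrt (a ^ 4 + b ^ 4 + c ^ 4 - a ^ 2 * b ^ 2 - a ^ 2 * c ^ 2 - b ^ 2 * c ^ 2))
      ↔ b < a) := by
  set Q : ℝ := a ^ 4 + b ^ 4 + c ^ 4 - a ^ 2 * b ^ 2 - a ^ 2 * c ^ 2 - b ^ 2 * c ^ 2 with hQdef
  have hQ : 0 ≤ Q := by
    nlinarith [sq_nonneg (a^2 - b^2), sq_nonneg (a^2 - c^2), sq_nonneg (b^2 - c^2)]
  set s : ℝ := Real.sqrt Q with hsdef
  have hs : 0 ≤ s := Real.sqrt_nonneg Q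
  have hs2 : s ^ 2 = Q := Real.sq_sqrt hQ
  constructor
  · -- min equals last
    have h1 : 8 * (a ^ 2 + b ^ 2 + c ^ 2) - 8 * s ≤ 4 * a ^ 2 + 16 * b ^ 2 + 4 * c ^ 2 := by
      nlinarith [sq_nonneg (a^2 - c^2), sq_nonneg (a^2 + c^2 - 2*b^2 - 2*s)]
    have h2 : 8 * (a ^ 2 + b ^ 2 + c ^ 2) - 8 * s ≤ 4 * a ^ 2 + 4 * b ^ 2 + 16 * c ^ 2 := by
      nlinarith [sq_nonneg (a^2 - b^2), sq_nonneg (a^2 + b^2 - 2*c^2 - 2*s)]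
    have h3 : 8 * (a ^ 2 + b ^ 2 + c ^ 2) - 8 * s ≤ 16 * a ^ 2 + 4 * b ^ 2 + 4 * c ^ 2 := by
      nlinarith [sq_nonneg (b^2 - c^2), sq_nonneg (b^2 + c^2 - 2*a^2 - 2*s)]
    have h4 : 8 * (a ^ 2 + b ^ 2 + c ^ 2) - 8 * s ≤ 8 * (a ^ 2 + b ^ 2 + c ^ 2) + 8 * s := by
      linarith
    rw [min_eq_right]
    exact le_min (le_min (le_min h1 h2) h3) h4
  · constructor
    · rintro ⟨-, h2, -, -⟩
      by_contra hab
      have hab' : a = b := le_antisymm (not_lt.mp hab) hba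
      subst hab'
      have : s = Real.sqrt ((a^2 - c^2)^2) := by
        rw [hsdef]; congr 1; ring
      rw [Real.sqrt_sq_eq_abs, abs_of_nonneg (by nlinarith : (0:ℝ) ≤ a^2 - c^2)] at this
      rw [this] at h2
      nlinarith
    · intro hba'
      have hx : b ^ 2 < a ^ 2 := by nlinarith
      have hQpos : 0 < Q := by nlinarith [sq_nonneg (a^2 - c^2), sq_nonneg (b^2 - c^2)]
      have hspos : 0 < s := Real.sqrt_pos.mpr hQpos
      refine ⟨?_, ?_, ?_, by linarith⟩
      · -- need a²+c²-2b² < 2s ; 4s² - (a²+c²-2b²)² = 3(a²-c²)² > 0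
        have hac : c ^ 2 < a ^ 2 := by nlinarith
        nlinarith [sq_nonneg (a^2 + c^2 - 2*b^2 - 2*s), sq_nonneg (a^2 - c^2)]
      · have key : (a^2 + b^2 - 2*c^2)^2 < 4 * s^2 := by
          nlinarith [sq_nonneg (a^2 - b^2)]
        nlinarith [sq_nonneg (a^2 + b^2 - 2*c^2 - 2*s)]
      · nlinarith [sq_nonneg (b^2 + c^2 - 2*a^2 - 2*s), sq_nonneg (b^2 - c^2)]
end

section
/- For any integer n ≥ 1 and positive reals b, s, the minimum over all pairs of integers (p,q) with p ≥ q ≥ 0, p ≡ q (mod 2), and (p,q) ≠ (0,0), of the quantity (4pn + 4q(p+n+1))s² + 2(p−q)(p−q+2)b², equals min{8ns² + 16b², 8(n+1)s²}, attained at (p,q) = (2,0) and (p,q) = (1,1) respectively. -/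
/-- For `n ≥ 1` and `b, s > 0`, the minimum over all pairs `(p,q)` of integers with
`p ≥ q ≥ 0`, `p ≡ q (mod 2)`, `(p,q) ≠ (0,0)`, of `(4pn + 4q(p+n+1))s² + 2(p−q)(p−q+2)b²`
equals `min{8ns² + 16b², 8(n+1)s²}`, attained at `(2,0)` and `(1,1)` respectively. -/
theorem stmt_4 (n : ℕ) (hn : 1 ≤ n) (b s : ℝ) (hb : 0 < b) (hs : 0 < s) :
    IsLeast
      {x : ℝ | ∃ p q : ℕ, q ≤ p ∧ p % 2 = q % 2 ∧ (p, q) ≠ (0, 0) ∧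
        x = (4 * (p : ℝ) * (n : ℝ) + 4 * (q : ℝ) * ((p : ℝ) + (n : ℝ) + 1)) * s ^ 2 +
          2 * ((p : ℝ) - (q : ℝ)) * ((p : ℝ) - (q : ℝ) + 2) * b ^ 2}
      (min (8 * (n : ℝ) * s ^ 2 + 16 * b ^ 2) (8 * ((n : ℝ) + 1) * s ^ 2)) ∧
    (4 * (2 : ℝ) * (n : ℝ) + 4 * (0 : ℝ) * ((2 : ℝ) + (n : ℝ) + 1)) * s ^ 2 +
        2 * ((2 : ℝ) - 0) * ((2 : ℝ) - 0 + 2) * b ^ 2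
      = 8 * (n : ℝ) * s ^ 2 + 16 * b ^ 2 ∧
    (4 * (1 : ℝ) * (n : ℝ) + 4 * (1 : ℝ) * ((1 : ℝ) + (n : ℝ) + 1)) * s ^ 2 +
        2 * ((1 : ℝ) - 1) * ((1 : ℝ) - 1 + 2) * b ^ 2
      = 8 * ((n : ℝ) + 1) * s ^ 2 := by
  refine ⟨⟨?_, ?_⟩, by ring, by ring⟩
  · rcases le_total (8 * (n : ℝ) * s ^ 2 + 16 * b ^ 2) (8 * ((n : ℝ) + 1) * s ^ 2) with h | h
    · rw [min_eq_left h]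
      exact ⟨2, 0, by norm_num, by norm_num, by norm_num, by push_cast; ring⟩
    · rw [min_eq_right h]
      exact ⟨1, 1, le_refl _, rfl, by norm_num, by push_cast; ring⟩
  · rintro x ⟨p, q, hqp, hmod, hne, rfl⟩
    have hn' : (1 : ℝ) ≤ (n : ℝ) := by exact_mod_cast hn
    have hqp' : (q : ℝ) ≤ (p : ℝ) := by exact_mod_cast hqp
    rcases Nat.eq_zero_or_pos q with hq0 | hq1
    · subst hq0
      have hp2 : 2 ≤ p := by
        rcases Nat.lt_or_ge p 2 with h | h
        · interval_cases p
          · exact absurd rfl hne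
          · simp at hmod
        · exact h
      have hp2' : (2 : ℝ) ≤ (p : ℝ) := by exact_mod_cast hp2
      refine le_trans (min_le_left _ _) ?_
      push_cast
      have h1 : 0 ≤ (n : ℝ) * ((p : ℝ) - 2) * s ^ 2 :=
        mul_nonneg (mul_nonneg (by linarith) (by linarith)) (sq_nonneg s)
      have h2 : 0 ≤ ((p : ℝ) - 2) * ((p : ℝ) + 4) * b ^ 2 :=
        mul_nonneg (mul_nonneg (by linarith) (by linarith)) (sq_nonneg b)
      nlinarith [h1, h2]
    · have hq1' : (1 : ℝ) ≤ (q : ℝ) := by exact_mod_cast hq1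
      have hp1' : (1 : ℝ) ≤ (p : ℝ) := le_trans hq1' hqp'
      refine le_trans (min_le_right _ _) ?_
      have h3 : 0 ≤ (n : ℝ) * ((p : ℝ) - 1) * s ^ 2 :=
        mul_nonneg (mul_nonneg (by linarith) (by linarith)) (sq_nonneg s)
      have h4 : 0 ≤ ((q : ℝ) - 1) * ((p : ℝ) + (n : ℝ) + 1) * s ^ 2 :=
        mul_nonneg (mul_nonneg (by linarith) (by linarith)) (sq_nonneg s)
      have h5 : 0 ≤ ((p : ℝ) - 1) * s ^ 2 := mul_nonneg (by linarith) (sq_nonneg s)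
      have h6 : 0 ≤ ((p : ℝ) - (q : ℝ)) * ((p : ℝ) - (q : ℝ) + 2) * b ^ 2 :=
        mul_nonneg (mul_nonneg (by linarith) (by linarith)) (sq_nonneg b)
      nlinarith [h3, h4, h5, h6]
end

section
/- For an integer n ≥ 1 and reals x, y, z > 0, define φ(x,y,z) = x² + y² + z² + (2n−1)(xy + xz + yz) + 2n(x + y + z − 6)xyz. Then φ(x,y,z) ≥ 0, with equality if and only if (x,y,z) = (1,1,1). -/
/-- For `n ≥ 1` and `x, y, z > 0`, the function
`φ(x,y,z) = x² + y² + z² + (2n−1)(xy+xz+yz) + 2n(x+y+z−6)xyz` is nonnegative, with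
equality iff `(x,y,z) = (1,1,1)`. -/
theorem stmt_6 (n : ℕ) (hn : 1 ≤ n) (x y z : ℝ) (hx : 0 < x) (hy : 0 < y) (hz : 0 < z) :
    0 ≤ x ^ 2 + y ^ 2 + z ^ 2 + (2 * (n : ℝ) - 1) * (x * y + x * z + y * z) +
        2 * (n : ℝ) * (x + y + z - 6) * (x * y * z) ∧
      (x ^ 2 + y ^ 2 + z ^ 2 + (2 * (n : ℝ) - 1) * (x * y + x * z + y * z) +
          2 * (n : ℝ) * (x + y + z - 6) * (x * y * z) = 0 ↔ (x, y, z) = (1, 1, 1)) := by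
  have hn' : (1:ℝ) ≤ (n:ℝ) := by exact_mod_cast hn
  have hp : 0 < x * y * z := by positivity
  -- AM-GM: (xy+xz+yz)(x+y+z) ≥ 9xyz, multiplied by xyz
  have hab : 9 * (x*y*z)^2 ≤ (x*y + x*z + y*z) * ((x+y+z) * (x*y*z)) := by
    nlinarith [mul_nonneg (mul_nonneg hz.le (sq_nonneg (x-y))) hp.le,
               mul_nonneg (mul_nonneg hx.le (sq_nonneg (y-z))) hp.le,
               mul_nonneg (mul_nonneg hy.le (sq_nonneg (x-z))) hp.le]
  have hapb : 0 < (x*y + x*z + y*z) + (x+y+z) * (x*y*z) + 6 * (x*y*z) := by positivity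
  have hT : 0 ≤ x*y + x*z + y*z + (x+y+z-6) * (x*y*z) := by
    nlinarith [hab, sq_nonneg ((x*y + x*z + y*z) - (x+y+z) * (x*y*z)), hapb, hp]
  have hS : 0 ≤ x^2 + y^2 + z^2 - (x*y + x*z + y*z) := by
    nlinarith [sq_nonneg (x-y), sq_nonneg (y-z), sq_nonneg (x-z)]
  have hkey : x ^ 2 + y ^ 2 + z ^ 2 + (2 * (n : ℝ) - 1) * (x * y + x * z + y * z) +
        2 * (n : ℝ) * (x + y + z - 6) * (x * y * z)
      = (x^2 + y^2 + z^2 - (x*y + x*z + y*z))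
        + 2 * (n:ℝ) * (x*y + x*z + y*z + (x+y+z-6) * (x*y*z)) := by ring
  have h2n : (0:ℝ) < 2 * (n:ℝ) := by linarith
  have h2nT : 0 ≤ 2 * (n:ℝ) * (x*y + x*z + y*z + (x+y+z-6) * (x*y*z)) :=
    mul_nonneg h2n.le hT
  constructor
  · rw [hkey]; linarith
  constructor
  · intro h0
    rw [hkey] at h0
    have hS0 : x^2 + y^2 + z^2 - (x*y + x*z + y*z) = 0 := by linarith
    have h2nT0 : 2 * (n:ℝ) * (x*y + x*z + y*z + (x+y+z-6) * (x*y*z)) = 0 := by linarith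
    have hT0 : x*y + x*z + y*z + (x+y+z-6) * (x*y*z) = 0 := by
      rcases mul_eq_zero.mp h2nT0 with h | h
      · exact absurd h h2n.ne'
      · exact h
    have hsum : (x-y)^2 + (y-z)^2 + (x-z)^2 = 0 := by linear_combination 2 * hS0
    have hxy : x = y := by
      have h1 : (x-y)^2 = 0 := by linarith [hsum, sq_nonneg (x-y), sq_nonneg (y-z), sq_nonneg (x-z)]
      have := sq_eq_zero_iff.mp h1
      linarith [this]
    have hyz : y = z := by
      have h1 : (y-z)^2 = 0 := by linarith [hsum, sq_nonneg (x-y), sq_nonneg (y-z), sq_nonneg (x-z)]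
      have := sq_eq_zero_iff.mp h1
      linarith [this]
    subst hxy
    subst hyz
    have h4 : 3 * x^2 * (x-1)^2 = 0 := by linear_combination hT0
    have hx2 : (3 * x^2 : ℝ) ≠ 0 := by positivity
    have h5 : (x-1)^2 = 0 := by
      rcases mul_eq_zero.mp h4 with h | h
      · exact absurd h hx2
      · exact h
    have := sq_eq_zero_iff.mp h5
    have hx1 : x = 1 := by linarith [this]
    simp [hx1]
  · intro h
    simp only [Prod.mk.injEq] at h
    obtain ⟨h1, h2, h3⟩ := h
    subst h1; subst h2; subst h3
    ring
end

section
/- Let n ≥ 1 be an integer and let p(x,y,z) = x² + y² + z² − 2(xy + xz + yz) + 2n(x+y+z)xyz + 8(n²+n+1)xyz. Then for all x, y > 0, p(x,y,0) = (x−y)², and the accumulation points of the zero set {p = 0} ∩ ℝ³_{>0} on the coordinate plane z = 0 are exactly the segment {(x,x,0) : 0 ≤ x ≤ ℓ_n}, where ℓ_n = (√((n³+n²+2n+1)(n+1)) − (n²+n+1))/n. -/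
/-- The polynomial `p(x,y,z) = x²+y²+z² − 2(xy+xz+yz) + 2n(x+y+z)xyz + 8(n²+n+1)xyz`
whose positivity characterizes Yamabe stability of `h(t₁,t₂,t₃)` via `(x,y,z)=(t₁²,t₂²,t₃²)`. -/
def stabPoly (n : ℕ) (x y z : ℝ) : ℝ :=
  x ^ 2 + y ^ 2 + z ^ 2 - 2 * (x * y + x * z + y * z) +
    2 * (n : ℝ) * (x + y + z) * (x * y * z) + 8 * ((n : ℝ) ^ 2 + (n : ℝ) + 1) * (x * y * z)

set_option maxHeartbeats 1000000 in
/-- For `n ≥ 1`: `p(x,y,0) = (x−y)²` for all `x, y > 0`, and the accumulation points of the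
zero set `{p = 0} ∩ ℝ³_{>0}` on the coordinate plane `z = 0` are exactly the segment
`{(x,x,0) : 0 ≤ x ≤ ℓ_n}` with `ℓ_n = (√((n³+n²+2n+1)(n+1)) − (n²+n+1))/n`. -/
theorem stmt_8 (n : ℕ) (hn : 1 ≤ n) :
    (∀ x y : ℝ, 0 < x → 0 < y → stabPoly n x y 0 = (x - y) ^ 2) ∧
    closure {v : ℝ × ℝ × ℝ | 0 < v.1 ∧ 0 < v.2.1 ∧ 0 < v.2.2 ∧
        stabPoly n v.1 v.2.1 v.2.2 = 0} ∩ {v : ℝ × ℝ × ℝ | v.2.2 = 0}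
      = {v : ℝ × ℝ × ℝ | ∃ x : ℝ, 0 ≤ x ∧
          x ≤ (Real.sqrt (((n : ℝ) ^ 3 + (n : ℝ) ^ 2 + 2 * (n : ℝ) + 1) * ((n : ℝ) + 1)) -
              ((n : ℝ) ^ 2 + (n : ℝ) + 1)) / (n : ℝ) ∧
          v = (x, x, 0)} := by
  have hc1 : (1:ℝ) ≤ (n:ℝ) := by exact_mod_cast hn
  have hc0 : (0:ℝ) < (n:ℝ) := by linarith
  set c : ℝ := (n:ℝ) with hcdef
  set K : ℝ := c ^ 2 + c + 1 with hKdef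
  have hKpos : 0 < K := by positivity
  have harg : (c ^ 3 + c ^ 2 + 2 * c + 1) * (c + 1) = K ^ 2 + c := by
    rw [hKdef]; ring
  set S : ℝ := Real.sqrt (K ^ 2 + c) with hSdef
  have hS2 : S ^ 2 = K ^ 2 + c := Real.sq_sqrt (by positivity)
  have hSnn : 0 ≤ S := Real.sqrt_nonneg _
  have hSK : K < S := by nlinarith
  set L : ℝ := (S - K) / c with hLdef
  have hL0 : 0 < L := div_pos (by linarith) hc0
  have hLquad : c * L ^ 2 + 2 * K * L - 1 = 0 := by
    rw [hLdef]; field_simp; nlinarith [hS2]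
  clear_value L S K c
  set Z : Set (ℝ × ℝ × ℝ) := {v : ℝ × ℝ × ℝ | 0 < v.1 ∧ 0 < v.2.1 ∧ 0 < v.2.2 ∧
      stabPoly n v.1 v.2.1 v.2.2 = 0} with hZdef
  -- continuity of the polynomial
  have hPcont : Continuous (fun v : ℝ × ℝ × ℝ => stabPoly n v.1 v.2.1 v.2.2) := by
    unfold stabPoly; fun_prop
  constructor
  · intro x y hx hy; unfold stabPoly; ring
  ext v
  simp only [Set.mem_inter_iff, Set.mem_setOf_eq]
  constructor
  · rintro ⟨hcl, hz0⟩
    -- coordinates nonneg and p = 0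
    have hsub : closure Z ⊆ {v : ℝ × ℝ × ℝ | 0 ≤ v.1 ∧ 0 ≤ v.2.1 ∧
        stabPoly n v.1 v.2.1 v.2.2 = 0} := by
      apply closure_minimal
      · rintro w ⟨h1, h2, _, h4⟩; exact ⟨h1.le, h2.le, h4⟩
      · refine IsClosed.inter ?_ (IsClosed.inter ?_ ?_)
        · exact isClosed_le continuous_const continuous_fst
        · exact isClosed_le continuous_const (continuous_fst.comp continuous_snd)
        · exact isClosed_eq hPcont continuous_const
    obtain ⟨hx0, hy0, hp0⟩ := hsub hcl
    obtain ⟨x, y, z⟩ := v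
    simp only at hx0 hy0 hp0 hz0 ⊢
    subst hz0
    have hxy : x = y := by
      have : (x - y) ^ 2 = 0 := by
        have hexp : stabPoly n x y 0 = (x - y) ^ 2 := by unfold stabPoly; ring
        rw [← hexp]; exact hp0
      have := pow_eq_zero_iff (n := 2) (by norm_num) |>.mp this
      linarith [this]
    subst hxy
    refine ⟨x, hx0, ?_, rfl⟩
    -- show x ≤ L
    have hLalt : (Real.sqrt ((c ^ 3 + c ^ 2 + 2 * c + 1) * (c + 1)) - K) / c = L := by
      rw [harg, hLdef, hSdef]
    rw [hLalt]
    by_contra hgt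
    push_neg at hgt
    have hxL : L < x := hgt
    have hquad : 0 < c * x ^ 2 + 2 * K * x - 1 := by
      have hx' : 0 < x := lt_trans hL0 hxL
      have hfac : 0 < (x - L) * (c * (x + L) + 2 * K) :=
        mul_pos (sub_pos.mpr hxL) (by nlinarith)
      nlinarith [hLquad, hfac]
    -- open neighborhood where p > 0 on the positive octant
    set q : ℝ × ℝ × ℝ → ℝ := fun w =>
      2 * c * (w.1 + w.2.1) * (w.1 * w.2.1) + 8 * K * (w.1 * w.2.1) - 2 * (w.1 + w.2.1)
      with hqdef
    have hqcont : Continuous q := by rw [hqdef]; fun_prop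
    have hqv : 0 < q (x, x, 0) := by
      simp only [hqdef]
      have hx0' : 0 < x := lt_trans hL0 hxL
      nlinarith
    have hopen : IsOpen (q ⁻¹' Set.Ioi 0) := hqcont.isOpen_preimage _ isOpen_Ioi
    rcases mem_closure_iff.mp hcl _ hopen hqv with ⟨w, hwq, hwZ⟩
    obtain ⟨hw1, hw2, hw3, hw4⟩ := hwZ
    have hq' : 0 < q w := hwq
    obtain ⟨a, b, d⟩ := w
    simp only at hw1 hw2 hw3 hw4 hq'
    have hexp : stabPoly n a b d = (a - b) ^ 2 + d ^ 2 + 2 * c * d ^ 2 * (a * b) +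
        d * (2 * c * (a + b) * (a * b) + 8 * K * (a * b) - 2 * (a + b)) := by
      unfold stabPoly; rw [hKdef, hcdef]; ring
    have hq'' : 0 < 2 * c * (a + b) * (a * b) + 8 * K * (a * b) - 2 * (a + b) := hq'
    rw [hexp] at hw4
    have t1 : (0:ℝ) ≤ (a - b) ^ 2 := sq_nonneg _
    have t2 : (0:ℝ) ≤ 2 * c * d ^ 2 * (a * b) := by positivity
    have t3 : 0 < d * (2 * c * (a + b) * (a * b) + 8 * K * (a * b) - 2 * (a + b)) :=
      mul_pos hw3 hq''
    linarith [sq_nonneg d]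
  · rintro ⟨x, hx0, hxL, hveq⟩
    subst hveq
    rw [show (Real.sqrt ((c ^ 3 + c ^ 2 + 2 * c + 1) * (c + 1)) - K) / c = L by
      rw [harg, hLdef, hSdef]] at hxL
    refine ⟨?_, rfl⟩
    -- key: every (a,a,0) with a ∈ Ioo 0 L is in closure Z
    have key : ∀ a ∈ Set.Ioo (0:ℝ) L, ((a, a, 0) : ℝ × ℝ × ℝ) ∈ closure Z := by
      rintro a ⟨ha0, haL⟩
      obtain ⟨A, hAdef⟩ : ∃ A : ℝ → ℝ, A = fun z => 1 + 2 * c * a * z := ⟨_, rfl⟩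
      obtain ⟨B, hBdef⟩ : ∃ B : ℝ → ℝ,
          B = fun z => -2 * a - 2 * z + 2 * c * a * z * (a + z) + 8 * K * a * z := ⟨_, rfl⟩
      obtain ⟨C, hCdef⟩ : ∃ C : ℝ → ℝ, C = fun z => (a - z) ^ 2 := ⟨_, rfl⟩
      obtain ⟨D, hDdef⟩ : ∃ D : ℝ → ℝ, D = fun z => B z ^ 2 - 4 * A z * C z := ⟨_, rfl⟩
      obtain ⟨X, hXdef⟩ : ∃ X : ℝ → ℝ,
          X = fun z => (-B z + Real.sqrt (D z)) / (2 * A z) := ⟨_, rfl⟩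
      have hA' : ∀ z, A z = 1 + 2 * c * a * z := fun z => by rw [hAdef]
      have hB' : ∀ z, B z = -2 * a - 2 * z + 2 * c * a * z * (a + z) + 8 * K * a * z :=
        fun z => by rw [hBdef]
      have hC' : ∀ z, C z = (a - z) ^ 2 := fun z => by rw [hCdef]
      have hD' : ∀ z, D z = B z ^ 2 - 4 * A z * C z := fun z => by rw [hDdef]
      have hX' : ∀ z, X z = (-B z + Real.sqrt (D z)) / (2 * A z) := fun z => by rw [hXdef]
      have hident : ∀ x' z : ℝ, stabPoly n x' a z = A z * x' ^ 2 + B z * x' + C z := by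
        intro x' z
        rw [hA', hB', hC', hKdef, hcdef]
        unfold stabPoly
        ring
      obtain ⟨M, hMdef⟩ : ∃ M : ℝ, M = 4 * a * (1 - 2 * K * a - c * a ^ 2) := ⟨_, rfl⟩
      have hM : 0 < M := by
        have hfac : 0 < (L - a) * (c * (L + a) + 2 * K) := by
          apply mul_pos (sub_pos.mpr haL)
          have := mul_pos hc0 (add_pos hL0 ha0)
          linarith
        have h7 : 0 < 1 - 2 * K * a - c * a ^ 2 := by nlinarith [hLquad, hfac]
        rw [hMdef]
        exact mul_pos (by linarith) h7
      obtain ⟨z₀, hz₀def⟩ : ∃ z₀ : ℝ, z₀ = M / (1 + 2 * c * a ^ 2) := ⟨_, rfl⟩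
      have hden : (0:ℝ) < 1 + 2 * c * a ^ 2 := by nlinarith [sq_nonneg a, mul_pos hc0 (mul_pos ha0 ha0)]
      have hz₀ : 0 < z₀ := hz₀def ▸ div_pos hM hden
      -- membership of the curve in Z
      have hmem : ∀ z ∈ Set.Ioo 0 z₀, ((X z, a, z) : ℝ × ℝ × ℝ) ∈ Z := by
        rintro z ⟨hz0', hzz₀⟩
        have hA : 0 < A z := by rw [hA']; nlinarith [mul_pos (mul_pos hc0 ha0) hz0']
        have hval : A z * a ^ 2 + B z * a + C z < 0 := by
          have h1 : A z * a ^ 2 + B z * a + C z = z * ((1 + 2 * c * a ^ 2) * z - M) := by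
            rw [hA', hB', hC', hMdef]; ring
          rw [h1]
          apply mul_neg_of_pos_of_neg hz0'
          have h8 : z < M / (1 + 2 * c * a ^ 2) := hz₀def ▸ hzz₀
          have h9 : (1 + 2 * c * a ^ 2) * z < M := (lt_div_iff₀' hden).mp h8
          linarith
        have h2 : D z = (2 * A z * a + B z) ^ 2 - 4 * A z * (A z * a ^ 2 + B z * a + C z) := by
          rw [hD']; ring
        have hD : 0 < D z := by
          nlinarith [sq_nonneg (2 * A z * a + B z), mul_pos hA (show 0 < -(A z * a ^ 2 + B z * a + C z) by linarith)]
        have hs2 : Real.sqrt (D z) ^ 2 = D z := Real.sq_sqrt hD.le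
        have hlt : 2 * A z * a + B z < Real.sqrt (D z) := by
          have habs : |2 * A z * a + B z| < Real.sqrt (D z) := by
            rw [← Real.sqrt_sq_eq_abs]
            apply Real.sqrt_lt_sqrt (sq_nonneg _)
            nlinarith [mul_pos hA (show 0 < -(A z * a ^ 2 + B z * a + C z) by linarith)]
          calc 2 * A z * a + B z ≤ |2 * A z * a + B z| := le_abs_self _
            _ < _ := habs
        have hxa : a < X z := by
          rw [hX', lt_div_iff₀ (by linarith : 0 < 2 * A z)]
          linarith
        have hX0 : 0 < X z := lt_trans ha0 hxa
        have hproot : stabPoly n (X z) a z = 0 := by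
          have hdisc : discrim (A z) (B z) (C z) = Real.sqrt (D z) * Real.sqrt (D z) := by
            rw [discrim, ← pow_two, hs2, hD']
          have h3 := (quadratic_eq_zero_iff hA.ne' hdisc (X z)).mpr (Or.inl (hX' z))
          rw [hident]
          rw [← h3]; ring
        exact ⟨hX0, ha0, hz0', hproot⟩
      -- continuity at 0
      have hcontX : ContinuousAt X 0 := by
        rw [hXdef]
        apply ContinuousAt.div
        · apply ContinuousAt.add
          · rw [hBdef]; fun_prop
          · apply Real.continuous_sqrt.continuousAt.comp
            rw [hDdef, hAdef, hBdef, hCdef]; fun_prop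
        · rw [hAdef]; fun_prop
        · rw [hA']; norm_num
      have hφ : ContinuousAt (fun z : ℝ => ((X z, a, z) : ℝ × ℝ × ℝ)) 0 := by
        apply ContinuousAt.prodMk hcontX
        apply ContinuousAt.prodMk continuousAt_const continuousAt_id
      have hX0val : X 0 = a := by
        have hDz : D 0 = 0 := by rw [hD', hA', hB', hC']; ring
        rw [hX', hDz, Real.sqrt_zero, hA', hB']
        norm_num
      have h0cl : (0:ℝ) ∈ closure (Set.Ioo 0 z₀) := by
        rw [closure_Ioo hz₀.ne]
        exact ⟨le_refl _, hz₀.le⟩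
      have := (hφ.continuousWithinAt).mem_closure_image h0cl
      have hsub2 : ((fun z : ℝ => ((X z, a, z) : ℝ × ℝ × ℝ)) '' Set.Ioo 0 z₀) ⊆ Z := by
        rintro w ⟨z, hz, rfl⟩; exact hmem z hz
      have h5 : ((X 0, a, (0:ℝ)) : ℝ × ℝ × ℝ) ∈ closure Z := closure_mono hsub2 this
      rwa [hX0val] at h5
    -- now conclude for a ∈ [0, L]
    have hg : Continuous (fun t : ℝ => ((t, t, 0) : ℝ × ℝ × ℝ)) := by fun_prop
    have himg : (fun t : ℝ => ((t, t, 0) : ℝ × ℝ × ℝ)) '' Set.Ioo 0 L ⊆ closure Z := by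
      rintro w ⟨t, ht, rfl⟩; exact key t ht
    have h6 : ((x, x, 0) : ℝ × ℝ × ℝ) ∈ closure ((fun t : ℝ => ((t, t, 0) : ℝ × ℝ × ℝ)) ''
        Set.Ioo 0 L) := by
      apply image_closure_subset_closure_image hg
      rw [closure_Ioo hL0.ne]
      exact ⟨x, ⟨hx0, hxL⟩, rfl⟩
    exact (closure_minimal himg isClosed_closure) h6
end

section
/- Let a ≥ b ≥ c > 0 be reals with b² ≥ 11c², and set σ₁ = a²+b²+c², σ₂ = a²b²+a²c²+b²c², β = σ₁ − √(σ₁²−3σ₂), A = 3(b²+c²) − 2β, B = β(2(b²+c²) − β). Then a² > B/(2A); in particular, since A·a⁴ − B·a² + 3a²b²c² = 0, one has a² = (B + √(B² − 12A a²b²c²))/(2A). -/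
set_option maxHeartbeats 1600000 in
/-- For `a ≥ b ≥ c > 0` with `b² ≥ 11c²`, setting `σ₁ = a²+b²+c²`,
`σ₂ = a²b²+a²c²+b²c²`, `β = σ₁ − √(σ₁²−3σ₂)`, `A = 3(b²+c²) − 2β`,
`B = β(2(b²+c²) − β)`, one has `a² > B/(2A)`; in particular, since
`A a⁴ − B a² + 3a²b²c² = 0`, one has `a² = (B + √(B² − 12A a²b²c²))/(2A)`. -/
theorem stmt_10 (a b c β A B : ℝ) (hc : 0 < c) (hcb : c ≤ b) (hba : b ≤ a)
    (h11 : 11 * c ^ 2 ≤ b ^ 2)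
    (hβ : β = (a ^ 2 + b ^ 2 + c ^ 2) -
      Real.sqrt ((a ^ 2 + b ^ 2 + c ^ 2) ^ 2 -
        3 * (a ^ 2 * b ^ 2 + a ^ 2 * c ^ 2 + b ^ 2 * c ^ 2)))
    (hA : A = 3 * (b ^ 2 + c ^ 2) - 2 * β)
    (hB : B = β * (2 * (b ^ 2 + c ^ 2) - β)) :
    B / (2 * A) < a ^ 2 ∧
      a ^ 2 = (B + Real.sqrt (B ^ 2 - 12 * A * (a ^ 2 * b ^ 2 * c ^ 2))) / (2 * A) := by
  obtain ⟨s, hsdef⟩ : ∃ s, s = Real.sqrt ((a ^ 2 + b ^ 2 + c ^ 2) ^ 2 -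
      3 * (a ^ 2 * b ^ 2 + a ^ 2 * c ^ 2 + b ^ 2 * c ^ 2)) := ⟨_, rfl⟩
  rw [← hsdef] at hβ
  have hb : 0 < b := lt_of_lt_of_le hc hcb
  have ha : 0 < a := lt_of_lt_of_le hb hba
  have hD : 0 ≤ (a ^ 2 + b ^ 2 + c ^ 2) ^ 2 -
      3 * (a ^ 2 * b ^ 2 + a ^ 2 * c ^ 2 + b ^ 2 * c ^ 2) := by
    nlinarith [sq_nonneg (a ^ 2 - b ^ 2), sq_nonneg (b ^ 2 - c ^ 2), sq_nonneg (a ^ 2 - c ^ 2)]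
  have hs2 : s ^ 2 = (a ^ 2 + b ^ 2 + c ^ 2) ^ 2 -
      3 * (a ^ 2 * b ^ 2 + a ^ 2 * c ^ 2 + b ^ 2 * c ^ 2) := by
    rw [hsdef]; exact Real.sq_sqrt hD
  have hs0 : 0 ≤ s := hsdef ▸ Real.sqrt_nonneg _
  -- the key estimate
  have hE : a ^ 4 * b ^ 4 + a ^ 4 * c ^ 4 - 6 * a ^ 4 * b ^ 2 * c ^ 2
      + 2 * a ^ 2 * b ^ 4 * c ^ 2 + 2 * a ^ 2 * b ^ 2 * c ^ 4 - 3 * b ^ 4 * c ^ 4 > 0 := by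
    nlinarith [mul_pos (mul_pos ha ha) (mul_pos hb hb), mul_pos hc hc,
      sq_nonneg (a * c), sq_nonneg (b * c), mul_le_mul_of_nonneg_left h11 (sq_nonneg a),
      mul_pos (mul_pos ha ha) (mul_pos hc hc),
      mul_le_mul_of_nonneg_right (mul_self_le_mul_self hb.le hba) (sq_nonneg c),
      mul_le_mul_of_nonneg_right h11 (mul_pos (mul_pos hb hb) (mul_pos hc hc)).le]
  have hT0 : 0 < a ^ 4 - a ^ 2 * (b ^ 2 + c ^ 2) / 2 + 3 * b ^ 2 * c ^ 2 / 2 := by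
    nlinarith [mul_pos (mul_pos hb hb) (mul_pos hc hc), mul_self_le_mul_self hb.le hba,
      mul_self_le_mul_self hc.le (hcb.trans hba)]
  have hkey : a ^ 2 * s > a ^ 4 - a ^ 2 * (b ^ 2 + c ^ 2) / 2 + 3 * b ^ 2 * c ^ 2 / 2 := by
    have h2 : (a ^ 2 * s) ^ 2 -
        (a ^ 4 - a ^ 2 * (b ^ 2 + c ^ 2) / 2 + 3 * b ^ 2 * c ^ 2 / 2) ^ 2 =
        (3 / 4) * (a ^ 4 * b ^ 4 + a ^ 4 * c ^ 4 - 6 * a ^ 4 * b ^ 2 * c ^ 2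
          + 2 * a ^ 2 * b ^ 4 * c ^ 2 + 2 * a ^ 2 * b ^ 2 * c ^ 4 - 3 * b ^ 4 * c ^ 4) := by
      linear_combination a ^ 4 * hs2
    nlinarith [h2, hE, hT0, mul_nonneg (sq_nonneg a) hs0]
  -- A * a² > 3 b² c²
  have hAa : A * a ^ 2 > 3 * b ^ 2 * c ^ 2 := by
    have h1 : A * a ^ 2 - 3 * b ^ 2 * c ^ 2 =
        2 * (a ^ 2 * s - (a ^ 4 - a ^ 2 * (b ^ 2 + c ^ 2) / 2 + 3 * b ^ 2 * c ^ 2 / 2)) := by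
      rw [hA, hβ]; ring
    nlinarith [hkey]
  have hA0 : 0 < A := by
    nlinarith [hAa, mul_pos ha ha, mul_pos (mul_pos hb hb) (mul_pos hc hc)]
  -- quadratic identity for β
  have hq : β ^ 2 - 2 * (a ^ 2 + b ^ 2 + c ^ 2) * β +
      3 * (a ^ 2 * b ^ 2 + a ^ 2 * c ^ 2 + b ^ 2 * c ^ 2) = 0 := by
    rw [hβ]; linear_combination hs2
  have hBA : B = A * a ^ 2 + 3 * b ^ 2 * c ^ 2 := by
    rw [hB, hA]; linear_combination -hq
  constructor
  · rw [div_lt_iff₀ (by positivity)]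
    nlinarith [hAa, hBA]
  · have hdisc : B ^ 2 - 12 * A * (a ^ 2 * b ^ 2 * c ^ 2) = (A * a ^ 2 - 3 * b ^ 2 * c ^ 2) ^ 2 := by
      rw [hBA]; ring
    rw [hdisc, Real.sqrt_sq (by linarith), eq_div_iff (by positivity)]
    linarith [hBA]
end

section
/- Let n ≥ 1 and s > 0, and let a₁, b₁, c₁, a₂, b₂, c₂ be positive reals with a_i > b_i ≥ c_i, b₁² + c₁² = b₂² + c₂², a₂²b₂²c₂² = 4a₁²b₁²c₁², a₂² ≥ ns² + 2b₂² + 3c₂², and a₂² < a₁². Then the quantity (ns⁴/(2a₁²b₁²c₁²))·((4a₁² − a₂²)(b₁²+c₁²) − 4b₁²c₁²(a₁²−a₂²)/a₂²) + ((b₁²+c₁²)² − 4b₁⁴c₁⁴/a₂⁴)/(a₁²b₁²c₁²)·(2a₁²+a₂²)(2a₁²−a₂²) − 16(a₁² − a₂²) is strictly positive. -/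
/-- Auxiliary polynomial/field inequality in the squared variables. -/
lemma stmt_13_aux (N A1 A2 S P : ℝ) (hN : 0 ≤ N) (hA2 : 0 < A2) (hS : 0 < S) (hP : 0 < P)
    (h12 : A2 < A1) (hSP : 4 * P ≤ S ^ 2) (h2S : 2 * S < A2)
    (hvol : 16 * A1 * P ≤ A2 * S ^ 2) :
    0 < N / (2 * (A1 * P)) * ((4 * A1 - A2) * S - 4 * P * (A1 - A2) / A2)
      + ((S ^ 2 - 4 * P ^ 2 / A2 ^ 2) / (A1 * P)) * ((2 * A1 + A2) * (2 * A1 - A2))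
      - 16 * (A1 - A2) := by
  have hA1 : 0 < A1 := hA2.trans h12
  have h12' : (0 : ℝ) ≤ A1 - A2 := by linarith
  -- first summand is nonnegative
  have hinner : 0 ≤ (4 * A1 - A2) * S - 4 * P * (A1 - A2) / A2 := by
    rw [sub_nonneg, div_le_iff₀ hA2]
    nlinarith [mul_le_mul_of_nonneg_right hSP h12',
      mul_nonneg (mul_nonneg hS.le h12') (by linarith : (0:ℝ) ≤ A2 - 2 * S),
      mul_nonneg (mul_nonneg hS.le hA2.le) (by linarith : (0:ℝ) ≤ 7 * A1 - A2)] -- keep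
  have h1 : 0 ≤ N / (2 * (A1 * P)) * ((4 * A1 - A2) * S - 4 * P * (A1 - A2) / A2) :=
    mul_nonneg (div_nonneg hN (by positivity)) hinner
  -- second summand beats 16 (A1 - A2)
  have hR : ((S ^ 2 - 4 * P ^ 2 / A2 ^ 2) / (A1 * P)) * ((2 * A1 + A2) * (2 * A1 - A2))
      = ((S ^ 2 * A2 ^ 2 - 4 * P ^ 2) * (4 * A1 ^ 2 - A2 ^ 2)) / (A1 * P * A2 ^ 2) := by
    field_simp
    ring
  have h4S : 4 * S ^ 2 < A2 ^ 2 := by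
    nlinarith [mul_self_lt_mul_self (by linarith : (0:ℝ) ≤ 2 * S) h2S]
  have hc1 : 64 * P ^ 2 ≤ S ^ 2 * A2 ^ 2 := by
    linarith [mul_le_mul hSP hSP (by positivity : (0:ℝ) ≤ 4 * P) (by positivity : (0:ℝ) ≤ S ^ 2),
      mul_nonneg (sq_nonneg S) (by linarith : (0:ℝ) ≤ A2 ^ 2 - 4 * S ^ 2)]
  have hA2lt : A2 ^ 2 < A1 ^ 2 := by
    nlinarith [mul_self_lt_mul_self hA2.le h12]
  have h4A : (0 : ℝ) < 4 * A1 ^ 2 - A2 ^ 2 := by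
    nlinarith [mul_pos hA1 hA1]
  have step1 : 16 * (A1 - A2) * (A1 * P * A2 ^ 2) ≤ (A1 - A2) * A2 ^ 3 * S ^ 2 := by
    linarith [mul_le_mul_of_nonneg_right hvol (mul_nonneg h12' (sq_nonneg A2))]
  have hbase : 16 * (A1 - A2) * A2 < 15 * (4 * A1 ^ 2 - A2 ^ 2) := by
    nlinarith [sq_nonneg (4 * A1 - 2 * A2), mul_pos hA1 hA1]
  have step2 : 16 * ((A1 - A2) * A2 ^ 3 * S ^ 2)
      < 15 * (S ^ 2 * A2 ^ 2 * (4 * A1 ^ 2 - A2 ^ 2)) := by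
    have h := mul_lt_mul_of_pos_right hbase
      (mul_pos (pow_pos hS 2) (pow_pos hA2 2))
    linarith [h]
  have step3 : 15 * (S ^ 2 * A2 ^ 2 * (4 * A1 ^ 2 - A2 ^ 2))
      ≤ 16 * ((S ^ 2 * A2 ^ 2 - 4 * P ^ 2) * (4 * A1 ^ 2 - A2 ^ 2)) := by
    have h := mul_nonneg (by linarith : (0:ℝ) ≤ S ^ 2 * A2 ^ 2 - 64 * P ^ 2) h4A.le
    linarith [h]
  have h2 : 16 * (A1 - A2)
      < ((S ^ 2 - 4 * P ^ 2 / A2 ^ 2) / (A1 * P)) * ((2 * A1 + A2) * (2 * A1 - A2)) := by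
    rw [hR, lt_div_iff₀ (by positivity)]
    nlinarith [step1, step2, step3, sq_nonneg A2]
  linarith

/-- Claim (RHS > 0) in the proof that a homogeneous `S^{4n+3}` cannot be isospectral to a
homogeneous `RP^{4n+3}`: under the stated hypotheses, the displayed quantity is positive. -/
theorem stmt_13 (n : ℕ) (hn : 1 ≤ n) (s a₁ b₁ c₁ a₂ b₂ c₂ : ℝ)
    (hs : 0 < s) (hc₁ : 0 < c₁) (hc₂ : 0 < c₂)
    (hcb₁ : c₁ ≤ b₁) (hba₁ : b₁ < a₁) (hcb₂ : c₂ ≤ b₂) (hba₂ : b₂ < a₂)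
    (heq : b₁ ^ 2 + c₁ ^ 2 = b₂ ^ 2 + c₂ ^ 2)
    (hvol : a₂ ^ 2 * b₂ ^ 2 * c₂ ^ 2 = 4 * (a₁ ^ 2 * b₁ ^ 2 * c₁ ^ 2))
    (hge : (n : ℝ) * s ^ 2 + 2 * b₂ ^ 2 + 3 * c₂ ^ 2 ≤ a₂ ^ 2)
    (hlt : a₂ ^ 2 < a₁ ^ 2) :
    0 < ((n : ℝ) * s ^ 4 / (2 * (a₁ ^ 2 * b₁ ^ 2 * c₁ ^ 2))) *
          ((4 * a₁ ^ 2 - a₂ ^ 2) * (b₁ ^ 2 + c₁ ^ 2) -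
            4 * b₁ ^ 2 * c₁ ^ 2 * (a₁ ^ 2 - a₂ ^ 2) / a₂ ^ 2) +
        (((b₁ ^ 2 + c₁ ^ 2) ^ 2 - 4 * b₁ ^ 4 * c₁ ^ 4 / a₂ ^ 4) /
            (a₁ ^ 2 * b₁ ^ 2 * c₁ ^ 2)) *
          ((2 * a₁ ^ 2 + a₂ ^ 2) * (2 * a₁ ^ 2 - a₂ ^ 2)) -
        16 * (a₁ ^ 2 - a₂ ^ 2) := by
  have hb₁ : 0 < b₁ := lt_of_lt_of_le hc₁ hcb₁
  have hb₂ : 0 < b₂ := lt_of_lt_of_le hc₂ hcb₂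
  have ha₂ : 0 < a₂ := hb₂.trans hba₂
  have hn' : (1 : ℝ) ≤ (n : ℝ) := by exact_mod_cast hn
  have hN : (0 : ℝ) ≤ (n : ℝ) * s ^ 4 := by positivity
  have hA2 : (0 : ℝ) < a₂ ^ 2 := by positivity
  have hS : (0 : ℝ) < b₁ ^ 2 + c₁ ^ 2 := by positivity
  have hP : (0 : ℝ) < b₁ ^ 2 * c₁ ^ 2 := by positivity
  have hSP : 4 * (b₁ ^ 2 * c₁ ^ 2) ≤ (b₁ ^ 2 + c₁ ^ 2) ^ 2 := by
    nlinarith [sq_nonneg (b₁ ^ 2 - c₁ ^ 2)]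
  have h2S : 2 * (b₁ ^ 2 + c₁ ^ 2) < a₂ ^ 2 := by
    have hns : s ^ 2 ≤ (n : ℝ) * s ^ 2 := by
      nlinarith [sq_nonneg s]
    nlinarith [sq_nonneg s, hc₂.le, sq_nonneg c₂, mul_pos hs hs]
  have hvol' : 16 * a₁ ^ 2 * (b₁ ^ 2 * c₁ ^ 2) ≤ a₂ ^ 2 * (b₁ ^ 2 + c₁ ^ 2) ^ 2 := by
    rw [heq]
    nlinarith [mul_nonneg hA2.le (sq_nonneg (b₂ ^ 2 - c₂ ^ 2))]
  have key := stmt_13_aux ((n : ℝ) * s ^ 4) (a₁ ^ 2) (a₂ ^ 2) (b₁ ^ 2 + c₁ ^ 2)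
    (b₁ ^ 2 * c₁ ^ 2) hN hA2 hS hP hlt hSP h2S hvol'
  convert key using 1
  ring
end

section
/- For integers k ≥ 0 and d ≥ 2, the identity Σ_{p+q=k, p ≥ q ≥ 0} (p − q + 1)·d_{p,q} = C(k+d, d) − C(k+d−2, d) holds for d = 4n+3, where d_{p,q} = ((p+q+2n+1)(p−q+1)/((2n+1)(p+1)))·C(p+2n, p)·C(q+2n−1, q). -/
namespace Stmt16Aux
open Finset

private lemma hockey (a : ℕ) : ∀ N, ∑ x ∈ range (N+1), (x+a).choose a = (N+a+1).choose (a+1)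
  | 0 => by simp
  | N+1 => by
    rw [sum_range_succ, hockey a N]
    have h1 : N+1+a+1 = (N+a+1)+1 := by omega
    have h2 : N+1+a = N+a+1 := by omega
    rw [h1, h2]
    have h3 := Nat.choose_succ_succ (N+a+1) a
    simp only [Nat.succ_eq_add_one] at h3
    omega

private lemma vand_core (b : ℕ) : ∀ a N, ∑ x ∈ range (N+1), (x+a).choose a * (N-x+b).choose b = (N+a+b+1).choose (a+b+1) := by
  induction b with
  | zero => intro a N; simpa using hockey a N
  | succ b ih =>
    intro a N
    induction N with
    | zero => simp
    | succ N ihN =>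
      rw [sum_range_succ]
      have hlast : (N+1+a).choose a * (N+1-(N+1)+(b+1)).choose (b+1) = (N+1+a).choose a := by simp
      have hsplit : ∀ x ∈ range (N+1),
          (x+a).choose a * (N+1-x+(b+1)).choose (b+1)
          = (x+a).choose a * (N-x+(b+1)).choose b + (x+a).choose a * (N-x+(b+1)).choose (b+1) := by
        intro x hx
        rw [mem_range] at hx
        have : N+1-x+(b+1) = (N-x+(b+1))+1 := by omega
        rw [this, Nat.choose_succ_succ, Nat.mul_add]
      rw [sum_congr rfl hsplit, sum_add_distrib]
      -- first sum + last term
      have hA : ∑ x ∈ range (N+1), (x+a).choose a * (N-x+(b+1)).choose b + (N+1+a).choose a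
          = (N+1+a+b+1).choose (a+b+1) := by
        have := ih a (N+1)
        rw [sum_range_succ] at this
        have h0 : (N+1+a).choose a * (N+1-(N+1)+b).choose b = (N+1+a).choose a := by simp
        rw [h0] at this
        have hcg : ∀ x ∈ range (N+1), (x+a).choose a * (N+1-x+b).choose b
            = (x+a).choose a * (N-x+(b+1)).choose b := by
          intro x hx; rw [mem_range] at hx
          have : N+1-x+b = N-x+(b+1) := by omega
          rw [this]
        rw [sum_congr rfl hcg] at this
        exact this
      have hB : ∑ x ∈ range (N+1), (x+a).choose a * (N-x+(b+1)).choose (b+1)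
          = (N+a+(b+1)+1).choose (a+(b+1)+1) := ihN
      have hp : (N+1+a+(b+1)+1).choose (a+(b+1)+1) = (N+1+a+b+1).choose (a+b+1) + (N+a+(b+1)+1).choose (a+(b+1)+1) := by
        have e1 : N+1+a+(b+1)+1 = (N+a+b+2)+1 := by omega
        have e2 : a+(b+1)+1 = (a+b+1)+1 := by omega
        rw [e1, e2, Nat.choose_succ_succ]
        have e3 : N+1+a+b+1 = N+a+b+2 := by omega
        have e4 : N+a+(b+1)+1 = N+a+b+2 := by omega
        rw [e3, e4]
      omega

private lemma vand_shift (a b t s K : ℕ) (h : t + s ≤ K) :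
    ∑ q ∈ range (K+1), (K-q+a).choose (a+t) * (q+b).choose (b+s)
    = (K+a+b+1).choose (a+b+t+s+1) := by
  set M := K - t - s with hM
  have hsub : Ico s (s+M+1) ⊆ range (K+1) := by
    intro x hx; rw [mem_Ico] at hx; rw [mem_range]; omega
  have hzero : ∀ x ∈ range (K+1), x ∉ Ico s (s+M+1) →
      (K-x+a).choose (a+t) * (x+b).choose (b+s) = 0 := by
    intro x hx hx'
    rw [mem_range] at hx; rw [mem_Ico] at hx'
    rcases Nat.lt_or_ge x s with hlt | hge
    · have : (x+b).choose (b+s) = 0 := Nat.choose_eq_zero_of_lt (by omega)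
      simp [this]
    · have : (K-x+a).choose (a+t) = 0 := Nat.choose_eq_zero_of_lt (by omega)
      simp [this]
  rw [← Finset.sum_subset hsub hzero, Finset.sum_Ico_eq_sum_range]
  have hlen : s + M + 1 - s = M + 1 := by omega
  rw [hlen]
  have hcg : ∀ r ∈ range (M+1),
      (K-(s+r)+a).choose (a+t) * ((s+r)+b).choose (b+s)
      = (r+(b+s)).choose (b+s) * (M-r+(a+t)).choose (a+t) := by
    intro r hr; rw [mem_range] at hr
    have e1 : K-(s+r)+a = M-r+(a+t) := by omega
    have e2 : (s+r)+b = r+(b+s) := by omega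
    rw [e1, e2, mul_comm]
  rw [sum_congr rfl hcg, vand_core (a+t) (b+s) M]
  have e3 : M+(b+s)+(a+t)+1 = K+a+b+1 := by omega
  have e4 : (b+s)+(a+t)+1 = a+b+t+s+1 := by omega
  rw [e3, e4]

private lemma E1 (m i : ℕ) : (i:ℝ) * ((i+m).choose m : ℝ) = ((m:ℝ)+1) * ((i+m).choose (m+1) : ℝ) := by
  have h := Nat.choose_succ_right_eq (i+m) m
  have e : i+m-m = i := by omega
  rw [e] at h
  have := congrArg (Nat.cast (R := ℝ)) h
  push_cast at this
  linarith [this]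

private lemma E2 (m i : ℕ) : (i:ℝ) * ((i+m).choose (m+1) : ℝ)
    = ((m:ℝ)+2) * ((i+m).choose (m+2) : ℝ) + ((i+m).choose (m+1) : ℝ) := by
  cases i with
  | zero =>
    simp [Nat.choose_eq_zero_of_lt (by omega : m < m+1), Nat.choose_eq_zero_of_lt (by omega : m < m+2)]
  | succ i =>
    have h := Nat.choose_succ_right_eq (i+1+m) (m+1)
    have e : i+1+m-(m+1) = i := by omega
    rw [e] at h
    have hc := congrArg (Nat.cast (R := ℝ)) h
    push_cast at hc
    push_cast
    linarith [hc]

private lemma termdec (m i j : ℕ) :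
    ((i:ℝ) - (j:ℝ))^2 * ((i+m).choose m : ℝ) * ((j+m).choose m : ℝ)
    = ((m:ℝ)+1)*((m:ℝ)+2) * (((i+m).choose (m+2) : ℝ) * ((j+m).choose m : ℝ))
      + ((m:ℝ)+1)*((m:ℝ)+2) * (((i+m).choose m : ℝ) * ((j+m).choose (m+2) : ℝ))
      + ((m:ℝ)+1) * (((i+m).choose (m+1) : ℝ) * ((j+m).choose m : ℝ))
      + ((m:ℝ)+1) * (((i+m).choose m : ℝ) * ((j+m).choose (m+1) : ℝ))
      - 2*((m:ℝ)+1)^2 * (((i+m).choose (m+1) : ℝ) * ((j+m).choose (m+1) : ℝ)) := by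
  have e1i := E1 m i
  have e2i := E2 m i
  have e1j := E1 m j
  have e2j := E2 m j
  linear_combination ((i:ℝ) * ((j+m).choose m : ℝ) - 2*(j:ℝ) * ((j+m).choose m : ℝ)) * e1i
    + ((m:ℝ)+1) * ((j+m).choose m : ℝ) * e2i
    + (j:ℝ) * ((i+m).choose m : ℝ) * e1j
    + ((m:ℝ)+1) * ((i+m).choose m : ℝ) * e2j
    - 2*((m:ℝ)+1) * ((i+m).choose (m+1) : ℝ) * e1j
private lemma sumA (m K : ℕ) (hK : 2 ≤ K) :
    ∑ q ∈ range (K+1), ((K:ℝ) - 2*q)^2 * ((K-q+m).choose m : ℝ) * ((q+m).choose m : ℝ)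
    = 2*((m:ℝ)+1) * ((K+m+m+2).choose (m+m+3) : ℝ) := by
  have hsplit : ∀ q ∈ range (K+1),
      ((K:ℝ) - 2*q)^2 * ((K-q+m).choose m : ℝ) * ((q+m).choose m : ℝ)
      = ((m:ℝ)+1)*((m:ℝ)+2) * (((K-q+m).choose (m+2) * ((q+m).choose m) : ℕ) : ℝ)
        + ((m:ℝ)+1)*((m:ℝ)+2) * (((K-q+m).choose m * ((q+m).choose (m+2)) : ℕ) : ℝ)
        + ((m:ℝ)+1) * (((K-q+m).choose (m+1) * ((q+m).choose m) : ℕ) : ℝ)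
        + ((m:ℝ)+1) * (((K-q+m).choose m * ((q+m).choose (m+1)) : ℕ) : ℝ)
        - 2*((m:ℝ)+1)^2 * (((K-q+m).choose (m+1) * ((q+m).choose (m+1)) : ℕ) : ℝ) := by
    intro q hq; rw [mem_range] at hq
    have hc : ((K:ℝ) - 2*(q:ℝ)) = ((K-q : ℕ):ℝ) - (q:ℝ) := by
      rw [Nat.cast_sub (by omega : q ≤ K)]; ring
    rw [hc]
    push_cast
    linear_combination termdec m (K-q) q
  rw [sum_congr rfl hsplit]
  rw [sum_sub_distrib, sum_add_distrib, sum_add_distrib, sum_add_distrib,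
    ← mul_sum, ← mul_sum, ← mul_sum, ← mul_sum, ← mul_sum,
    ← Nat.cast_sum, ← Nat.cast_sum, ← Nat.cast_sum, ← Nat.cast_sum, ← Nat.cast_sum]
  have V20 : ∑ q ∈ range (K+1), (K-q+m).choose (m+2) * ((q+m).choose m)
      = (K+m+m+1).choose (m+m+3) := by
    have := vand_shift m m 2 0 K (by omega)
    simpa using this
  have V02 : ∑ q ∈ range (K+1), (K-q+m).choose m * ((q+m).choose (m+2))
      = (K+m+m+1).choose (m+m+3) := by
    have := vand_shift m m 0 2 K (by omega)
    have e : m+m+0+2+1 = m+m+3 := by omega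
    rw [e] at this
    simpa using this
  have V10 : ∑ q ∈ range (K+1), (K-q+m).choose (m+1) * ((q+m).choose m)
      = (K+m+m+1).choose (m+m+2) := by
    have := vand_shift m m 1 0 K (by omega)
    simpa using this
  have V01 : ∑ q ∈ range (K+1), (K-q+m).choose m * ((q+m).choose (m+1))
      = (K+m+m+1).choose (m+m+2) := by
    have := vand_shift m m 0 1 K (by omega)
    have e : m+m+0+1+1 = m+m+2 := by omega
    rw [e] at this
    simpa using this
  have V11 : ∑ q ∈ range (K+1), (K-q+m).choose (m+1) * ((q+m).choose (m+1))
      = (K+m+m+1).choose (m+m+3) := by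
    have := vand_shift m m 1 1 K (by omega)
    have e : m+m+1+1+1 = m+m+3 := by omega
    rw [e] at this
    simpa using this
  rw [V20, V02, V10, V01, V11]
  have hp : (K+m+m+2).choose (m+m+3) = (K+m+m+1).choose (m+m+2) + (K+m+m+1).choose (m+m+3) := by
    have e1 : K+m+m+2 = (K+m+m+1)+1 := by omega
    have e2 : m+m+3 = (m+m+2)+1 := by omega
    rw [e1, e2, Nat.choose_succ_succ]
  rw [hp]
  push_cast
  ring

private lemma sym (m k : ℕ) :
    ∑ q ∈ range (k+2), ((k:ℝ)+1-2*q)^2 * (((k+1-q+m).choose m : ℕ) : ℝ) * (((q+m).choose m : ℕ) : ℝ)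
    = 2 * ∑ q ∈ filter (fun q => 2*q ≤ k) (range (k+1)),
        ((k:ℝ)+1-2*q)^2 * (((k+1-q+m).choose m : ℕ) : ℝ) * (((q+m).choose m : ℕ) : ℝ) := by
  set G : ℕ → ℝ := fun q => ((k:ℝ)+1-2*q)^2 * (((k+1-q+m).choose m : ℕ) : ℝ) * (((q+m).choose m : ℕ) : ℝ) with hG
  rw [← sum_filter_add_sum_filter_not (range (k+2)) (fun q => 2*q ≤ k) G]
  have h1 : ∑ q ∈ filter (fun q => 2*q ≤ k) (range (k+2)), G q
      = ∑ q ∈ filter (fun q => 2*q ≤ k) (range (k+1)), G q := by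
    symm
    apply Finset.sum_subset
    · intro x hx; simp only [mem_filter, mem_range] at hx ⊢; omega
    · intro x hx hx'
      simp only [mem_filter, mem_range] at hx hx'
      exact absurd hx (by omega)
  have h2 : ∑ q ∈ filter (fun q => ¬ 2*q ≤ k) (range (k+2)), G q
      = ∑ q ∈ filter (fun q => k+2 ≤ 2*q) (range (k+2)), G q := by
    symm
    apply Finset.sum_subset
    · intro x hx; simp only [mem_filter, mem_range] at hx ⊢; omega
    · intro x hx hx'
      simp only [mem_filter, mem_range] at hx hx'
      have hx2 : 2*x = k+1 := by omega
      have hc : ((k:ℝ)+1-2*(x:ℝ)) = 0 := by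
        have := congrArg (Nat.cast (R := ℝ)) hx2
        push_cast at this
        linarith
      rw [hG]
      simp only [hc]
      simp
  have h3 : ∑ q ∈ filter (fun q => k+2 ≤ 2*q) (range (k+2)), G q
      = ∑ q ∈ filter (fun q => 2*q ≤ k) (range (k+1)), G q := by
    apply Finset.sum_nbij' (i := fun q => k+1-q) (j := fun q => k+1-q)
    · intro a ha; simp only [mem_filter, mem_range] at ha ⊢; omega
    · intro a ha; simp only [mem_filter, mem_range] at ha ⊢; omega
    · intro a ha; simp only [mem_filter, mem_range] at ha; omega
    · intro a ha; simp only [mem_filter, mem_range] at ha; omega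
    · intro a ha
      simp only [mem_filter, mem_range] at ha
      simp only [hG]
      have e1 : k+1-(k+1-a)+m = a+m := by omega
      have e2 : (k+1-a)+m = k+1-a+m := rfl
      rw [e1]
      have hc : (((k+1-a : ℕ)) : ℝ) = (k:ℝ)+1-(a:ℝ) := by
        rw [Nat.cast_sub (by omega : a ≤ k+1)]; push_cast; ring
      simp only [hc]
      ring
  rw [h1, h2, h3]
  ring

private lemma termwise (n' k q : ℕ) (hq : 2*q ≤ k) :
    ((((k - q : ℕ) : ℝ) - (q : ℝ) + 1) *
        (((((k - q : ℕ) : ℝ) + (q : ℝ) + 2 * ((n'+1 : ℕ) : ℝ) + 1) *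
              (((k - q : ℕ) : ℝ) - (q : ℝ) + 1) /
            ((2 * ((n'+1 : ℕ) : ℝ) + 1) * (((k - q : ℕ) : ℝ) + 1))) *
          (Nat.choose ((k - q) + 2 * (n'+1)) (k - q) : ℝ) *
          (Nat.choose (q + 2 * (n'+1) - 1) q : ℝ)))
    = (((k:ℝ) + 2*(n':ℝ) + 3) / ((2*(n':ℝ)+3) * (2*(n':ℝ)+2))) *
      (((k:ℝ)+1-2*q)^2 * (((k+1-q+(2*n'+1)).choose (2*n'+1) : ℕ) : ℝ)
        * (((q+(2*n'+1)).choose (2*n'+1) : ℕ) : ℝ)) := by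
  have hqk : q ≤ k := by omega
  have e0 : (k - q) + 2 * (n'+1) = (k-q) + (2*n'+2) := by omega
  have e1 : q + 2 * (n'+1) - 1 = q + (2*n'+1) := by omega
  have e2 : k+1-q+(2*n'+1) = (k-q) + (2*n'+2) := by omega
  rw [e0, e1, e2]
  -- symmetry of binomials
  have hsym1 : ((k-q) + (2*n'+2)).choose (k-q) = ((k-q) + (2*n'+2)).choose (2*n'+2) := by
    have := Nat.choose_symm (n := (k-q)+(2*n'+2)) (k := k-q) (by omega)
    have e : (k-q)+(2*n'+2) - (k-q) = 2*n'+2 := by omega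
    rw [e] at this
    exact this.symm
  have hsym2 : (q + (2*n'+1)).choose q = (q + (2*n'+1)).choose (2*n'+1) := by
    have := Nat.choose_symm (n := q+(2*n'+1)) (k := q) (by omega)
    have e : q+(2*n'+1) - q = 2*n'+1 := by omega
    rw [e] at this
    exact this.symm
  rw [hsym1, hsym2]
  -- key recurrence: C(N, m+1)*(m+1) = C(N, m)*(N-m) with N = (k-q)+(2n'+2), m = 2n'+1
  have F1 : ((k-q) + (2*n'+2)).choose (2*n'+2) * (2*n'+2)
      = ((k-q) + (2*n'+2)).choose (2*n'+1) * ((k-q)+1) := by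
    have := Nat.choose_succ_right_eq ((k-q)+(2*n'+2)) (2*n'+1)
    have ee : (k-q)+(2*n'+2) - (2*n'+1) = (k-q)+1 := by omega
    have e3 : 2*n'+1+1 = 2*n'+2 := by omega
    rw [ee, e3] at this
    exact this
  have hF1 : (((k-q) + (2*n'+2)).choose (2*n'+2) : ℝ) * (2*(n':ℝ)+2)
      = (((k-q) + (2*n'+2)).choose (2*n'+1) : ℝ) * (((k-q:ℕ):ℝ)+1) := by
    have := congrArg (Nat.cast (R := ℝ)) F1
    push_cast at this
    linarith [this]
  have hcast : ((k - q : ℕ) : ℝ) = (k:ℝ) - (q:ℝ) := by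
    rw [Nat.cast_sub hqk]
  rw [hcast] at hF1 ⊢
  have hyx : (q:ℝ) ≤ (k:ℝ) := by exact_mod_cast hqk
  push_cast
  set x := (k:ℝ) with hx
  set y := (q:ℝ) with hy
  set v := (n':ℝ) with hv
  set A := ((((k-q) + (2*n'+2)).choose (2*n'+2) : ℕ) : ℝ) with hA
  set A' := ((((k-q) + (2*n'+2)).choose (2*n'+1) : ℕ) : ℝ) with hA'
  set B := (((q + (2*n'+1)).choose (2*n'+1) : ℕ) : ℝ) with hB
  have hne1 : (x - y) + 1 ≠ 0 := by
    have : (0:ℝ) ≤ x - y := by linarith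
    linarith
  have hne2 : (2*v+3) ≠ 0 := by positivity
  have hne3 : (2*v+2) ≠ 0 := by positivity
  have hne4 : 2*(v+1)+1 ≠ 0 := by positivity
  have hne5 : v+1 ≠ 0 := by positivity
  field_simp
  ring_nf
  ring_nf at hF1
  linear_combination ((x+2*v+3)*(x-2*y+1)^2*(2*v+3)*B) * hF1

private lemma rhs_id (n' k : ℕ) :
    (2*(n':ℝ)+3) * (((k+4*n'+7).choose (4*n'+7) : ℕ) : ℝ)
      - (2*(n':ℝ)+3) * (((k+4*n'+5).choose (4*n'+7) : ℕ) : ℝ)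
    = ((k:ℝ) + 2*(n':ℝ) + 3) * (((k+4*n'+5).choose (4*n'+5) : ℕ) : ℝ) := by
  have P1 : (k+4*n'+7).choose (4*n'+7)
      = (k+4*n'+6).choose (4*n'+6) + (k+4*n'+6).choose (4*n'+7) := by
    have e1 : k+4*n'+7 = (k+4*n'+6)+1 := by omega
    have e2 : 4*n'+7 = (4*n'+6)+1 := by omega
    rw [e1, e2, Nat.choose_succ_succ]
  have P2 : (k+4*n'+6).choose (4*n'+6)
      = (k+4*n'+5).choose (4*n'+5) + (k+4*n'+5).choose (4*n'+6) := by
    have e1 : k+4*n'+6 = (k+4*n'+5)+1 := by omega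
    have e2 : 4*n'+6 = (4*n'+5)+1 := by omega
    rw [e1, e2, Nat.choose_succ_succ]
  have P3 : (k+4*n'+6).choose (4*n'+7)
      = (k+4*n'+5).choose (4*n'+6) + (k+4*n'+5).choose (4*n'+7) := by
    have e1 : k+4*n'+6 = (k+4*n'+5)+1 := by omega
    have e2 : 4*n'+7 = (4*n'+6)+1 := by omega
    rw [e1, e2, Nat.choose_succ_succ]
  have F3 : (k+4*n'+5).choose (4*n'+6) * (4*n'+6) = (k+4*n'+5).choose (4*n'+5) * k := by
    have := Nat.choose_succ_right_eq (k+4*n'+5) (4*n'+5)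
    have e1 : 4*n'+5+1 = 4*n'+6 := by omega
    have e2 : k+4*n'+5 - (4*n'+5) = k := by omega
    rw [e1, e2] at this
    exact this
  have p1 := congrArg (Nat.cast (R := ℝ)) P1
  have p2 := congrArg (Nat.cast (R := ℝ)) P2
  have p3 := congrArg (Nat.cast (R := ℝ)) P3
  have f3 := congrArg (Nat.cast (R := ℝ)) F3
  push_cast at p1 p2 p3 f3
  linear_combination (2*(n':ℝ)+3)*p1 + (2*(n':ℝ)+3)*p2 + (2*(n':ℝ)+3)*p3 + f3

end Stmt16Aux

open Finset Stmt16Aux in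
/-- For `d = 4n+3` and any `k ≥ 0`, the identity
`Σ_{p+q=k, p ≥ q ≥ 0} (p−q+1)·d_{p,q} = C(k+d, d) − C(k+d−2, d)` holds, where
`d_{p,q} = ((p+q+2n+1)(p−q+1)/((2n+1)(p+1))) C(p+2n, p) C(q+2n−1, q)`, with the
convention `C(a,b) = 0` for `a < b`. The sum runs over `q` with `p = k − q` and `q ≤ p`. -/
theorem stmt_16 (n k : ℕ) (hn : 1 ≤ n) :
    ∑ q ∈ Finset.filter (fun q => 2 * q ≤ k) (Finset.range (k + 1)),
      ((((k - q : ℕ) : ℝ) - (q : ℝ) + 1) *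
        (((((k - q : ℕ) : ℝ) + (q : ℝ) + 2 * (n : ℝ) + 1) *
              (((k - q : ℕ) : ℝ) - (q : ℝ) + 1) /
            ((2 * (n : ℝ) + 1) * (((k - q : ℕ) : ℝ) + 1))) *
          (Nat.choose ((k - q) + 2 * n) (k - q) : ℝ) *
          (Nat.choose (q + 2 * n - 1) q : ℝ)))
      = (Nat.choose (k + (4 * n + 3)) (4 * n + 3) : ℝ) -
        (Nat.choose (k + (4 * n + 3) - 2) (4 * n + 3) : ℝ) := by
  obtain ⟨n', rfl⟩ : ∃ n', n = n'+1 := ⟨n-1, by omega⟩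
  rcases Nat.eq_zero_or_pos k with hk0 | hk1
  · subst hk0
    have hfil : Finset.filter (fun q => 2 * q ≤ 0) (Finset.range 1) = {0} := rfl
    rw [hfil, Finset.sum_singleton]
    have h2 : (0 + (4 * (n'+1) + 3)).choose (4 * (n'+1) + 3) = 1 := by
      simp
    have h3 : (0 + (4 * (n'+1) + 3) - 2).choose (4 * (n'+1) + 3) = 0 :=
      Nat.choose_eq_zero_of_lt (by omega)
    rw [h2, h3]
    have hne : (2 * ((n'+1 : ℕ) : ℝ) + 1) ≠ 0 := by positivity
    simp only [Nat.sub_self, Nat.cast_zero, Nat.choose_zero_right]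
    push_cast
    field_simp
    ring
  · -- main case
    have h1 : ∑ q ∈ Finset.filter (fun q => 2 * q ≤ k) (Finset.range (k + 1)),
        ((((k - q : ℕ) : ℝ) - (q : ℝ) + 1) *
        (((((k - q : ℕ) : ℝ) + (q : ℝ) + 2 * ((n'+1 : ℕ) : ℝ) + 1) *
              (((k - q : ℕ) : ℝ) - (q : ℝ) + 1) /
            ((2 * ((n'+1 : ℕ) : ℝ) + 1) * (((k - q : ℕ) : ℝ) + 1))) *
          (Nat.choose ((k - q) + 2 * (n'+1)) (k - q) : ℝ) *
          (Nat.choose (q + 2 * (n'+1) - 1) q : ℝ)))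
        = (((k:ℝ) + 2*(n':ℝ) + 3) / ((2*(n':ℝ)+3) * (2*(n':ℝ)+2))) *
          ∑ q ∈ Finset.filter (fun q => 2 * q ≤ k) (Finset.range (k + 1)),
            ((k:ℝ)+1-2*q)^2 * (((k+1-q+(2*n'+1)).choose (2*n'+1) : ℕ) : ℝ)
              * (((q+(2*n'+1)).choose (2*n'+1) : ℕ) : ℝ) := by
      rw [Finset.mul_sum]
      refine Finset.sum_congr rfl fun q hq => ?_
      simp only [Finset.mem_filter, Finset.mem_range] at hq
      exact termwise n' k q hq.2
    rw [h1]
    have hA := sumA (2*n'+1) (k+1) (by omega)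
    have e0 : k+1+1 = k+2 := by omega
    have e2 : k+1+(2*n'+1)+(2*n'+1)+2 = k+4*n'+5 := by omega
    have e3 : 2*n'+1+(2*n'+1)+3 = 4*n'+5 := by omega
    rw [e0, e2, e3] at hA
    push_cast at hA
    have hsym := sym (2*n'+1) k
    have h2 : ∑ q ∈ Finset.filter (fun q => 2 * q ≤ k) (Finset.range (k + 1)),
        ((k:ℝ)+1-2*q)^2 * (((k+1-q+(2*n'+1)).choose (2*n'+1) : ℕ) : ℝ)
          * (((q+(2*n'+1)).choose (2*n'+1) : ℕ) : ℝ)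
        = (2*(n':ℝ)+2) * (((k+4*n'+5).choose (4*n'+5) : ℕ) : ℝ) := by
      rw [hA] at hsym
      linarith [hsym]
    rw [h2]
    have r3 : k + (4*(n'+1)+3) - 2 = k+4*n'+5 := by omega
    have r1 : k + (4*(n'+1)+3) = k+4*n'+7 := by omega
    have r2 : 4*(n'+1)+3 = 4*n'+7 := by omega
    rw [r3, r1, r2]
    have hr := rhs_id n' k
    have hne2 : (2*(n':ℝ)+3) ≠ 0 := by positivity
    have hne3 : (2*(n':ℝ)+2) ≠ 0 := by positivity
    field_simp
    linear_combination (-1 : ℝ) * hr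
end

section
/- Let n ≥ 1 and p(x,y,z) = x² + y² + z² − 2(xy+xz+yz) + 2n(x+y+z)xyz + 8(n²+n+1)xyz. If (x,y,z) ∈ ℝ³_{>0} lies on the zero set of p, then, with σ₁ = x+y+z, one has 9 − 8(n²+n+1)σ₁ − 2nσ₁² ≥ 0; in particular every such point satisfies σ₁ = x+y+z < 9/8, and consequently the zero set p⁻¹(0) ∩ ℝ³_{>0} is a bounded subset of ℝ³. -/
set_option maxHeartbeats 1000000

private lemma cube_nonneg {a : ℝ} (h : 0 ≤ a ^ 3) : 0 ≤ a := by
  by_contra hc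
  push_neg at hc
  nlinarith [mul_pos (mul_pos (neg_pos.2 hc) (neg_pos.2 hc)) (neg_pos.2 hc)]

private lemma factor_nonneg {c t u v : ℝ} (ht : 0 < t) (h : c * t = u + v)
    (hu : 0 ≤ u) (hv : 0 ≤ v) : 0 ≤ c := by
  have h1 : 0 ≤ c * t := h ▸ add_nonneg hu hv
  rw [mul_comm] at h1; exact nonneg_of_mul_nonneg_right h1 ht

lemma master (m s q t : ℝ) (hm : 1 ≤ m) (hs : 0 < s) (ht : 0 < t)
    (hp : s^2 - 4*q + 2*m*s*t + 8*(m^2+m+1)*t = 0)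
    (hd : 0 ≤ s^2*q^2 - 4*q^3 - 4*s^3*t - 27*t^2 + 18*s*q*t) :
    0 ≤ 9 - 8*(m^2+m+1)*s - 2*m*s^2 := by
  have h2 : 0 < 4 * (m^2+m+1) + m * s := by nlinarith
  have h3 : 0 ≤ 2*(4*(m^2+m+1)+m*s)^3 :=
    mul_nonneg (by norm_num) (pow_nonneg h2.le 3)
  have hK3t : (9 - 8*(m^2+m+1)*s - 2*m*s^2)^3 * t
      = (2*(-(1/2)*(4*(m^2+m+1)+m*s)^3)*t
          + (-27+36*(m^2+m+1)*s-(8+7*m+24*m^2+16*m^3+8*m^4)*s^2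
             -4*m*(m^2+m+1)*s^3-(1/2)*m^2*s^4))^2 * t
        + 2*(4*(m^2+m+1)+m*s)^3 * (s^2*q^2 - 4*q^3 - 4*s^3*t - 27*t^2 + 18*s*q*t) := by
    linear_combination (2*(4*(m^2+m+1)+m*s)^3 *
      ((s^2*(((s^2+2*m*s*t+8*(m^2+m+1)*t)/4)+q)
        -4*(((s^2+2*m*s*t+8*(m^2+m+1)*t)/4)^2
            +((s^2+2*m*s*t+8*(m^2+m+1)*t)/4)*q+q^2)+18*s*t)/4)) * hp
  exact cube_nonneg (factor_nonneg ht hK3t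
    (mul_nonneg (sq_nonneg _) ht.le) (mul_nonneg h3 hd))

lemma key_ineq (m x y z : ℝ) (hm : 1 ≤ m) (hx : 0 < x) (hy : 0 < y) (hz : 0 < z)
    (hp : x ^ 2 + y ^ 2 + z ^ 2 - 2 * (x * y + x * z + y * z) +
          2 * m * (x + y + z) * (x * y * z) +
          8 * (m ^ 2 + m + 1) * (x * y * z) = 0) :
    0 ≤ 9 - 8 * (m ^ 2 + m + 1) * (x + y + z) - 2 * m * (x + y + z) ^ 2 ∧
      x + y + z < 9 / 8 := by
  have hs : 0 < x + y + z := by linarith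
  have ht : 0 < x * y * z := by positivity
  have hp' : (x+y+z)^2 - 4*(x*y+x*z+y*z) + 2*m*(x+y+z)*(x*y*z)
      + 8*(m^2+m+1)*(x*y*z) = 0 := by linear_combination hp
  have hd : 0 ≤ (x+y+z)^2*(x*y+x*z+y*z)^2 - 4*(x*y+x*z+y*z)^3
      - 4*(x+y+z)^3*(x*y*z) - 27*(x*y*z)^2
      + 18*(x+y+z)*(x*y+x*z+y*z)*(x*y*z) := by
    have h : (x+y+z)^2*(x*y+x*z+y*z)^2 - 4*(x*y+x*z+y*z)^3
        - 4*(x+y+z)^3*(x*y*z) - 27*(x*y*z)^2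
        + 18*(x+y+z)*(x*y+x*z+y*z)*(x*y*z)
        = ((x-y)*(y-z)*(x-z))^2 := by ring
    rw [h]; positivity
  have hK := master m (x+y+z) (x*y+x*z+y*z) (x*y*z) hm hs ht hp' hd
  refine ⟨by linarith, ?_⟩
  have hN : (0:ℝ) ≤ m^2 + m - 2 := by nlinarith
  nlinarith [mul_nonneg hN hs.le, mul_pos (mul_pos hs hs) (lt_of_lt_of_le one_pos hm)]

/-- For `n ≥ 1` and `p(x,y,z) = x²+y²+z² − 2(xy+xz+yz) + 2n(x+y+z)xyz + 8(n²+n+1)xyz`: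
every point `(x,y,z)` of the zero set of `p` in the open positive octant satisfies
`9 − 8(n²+n+1)σ₁ − 2nσ₁² ≥ 0` and `σ₁ = x+y+z < 9/8`; consequently the zero set
`p⁻¹(0) ∩ ℝ³_{>0}` is a bounded subset of `ℝ³`. -/
theorem stmt_19 (n : ℕ) (hn : 1 ≤ n) :
    (∀ x y z : ℝ, 0 < x → 0 < y → 0 < z →
      x ^ 2 + y ^ 2 + z ^ 2 - 2 * (x * y + x * z + y * z) +
          2 * (n : ℝ) * (x + y + z) * (x * y * z) +
          8 * ((n : ℝ) ^ 2 + (n : ℝ) + 1) * (x * y * z) = 0 →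
      0 ≤ 9 - 8 * ((n : ℝ) ^ 2 + (n : ℝ) + 1) * (x + y + z) - 2 * (n : ℝ) * (x + y + z) ^ 2 ∧
        x + y + z < 9 / 8) ∧
    Bornology.IsBounded {v : ℝ × ℝ × ℝ | 0 < v.1 ∧ 0 < v.2.1 ∧ 0 < v.2.2 ∧
      v.1 ^ 2 + v.2.1 ^ 2 + v.2.2 ^ 2 -
          2 * (v.1 * v.2.1 + v.1 * v.2.2 + v.2.1 * v.2.2) +
          2 * (n : ℝ) * (v.1 + v.2.1 + v.2.2) * (v.1 * v.2.1 * v.2.2) +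
          8 * ((n : ℝ) ^ 2 + (n : ℝ) + 1) * (v.1 * v.2.1 * v.2.2) = 0} := by
  have hm : (1:ℝ) ≤ (n:ℝ) := by exact_mod_cast hn
  constructor
  · intro x y z hx hy hz hp
    exact key_ineq (n:ℝ) x y z hm hx hy hz hp
  · rw [isBounded_iff_forall_norm_le]
    refine ⟨9/8, ?_⟩
    rintro ⟨a, b, c⟩ ⟨ha, hb, hc, hp⟩
    obtain ⟨-, hsum⟩ := key_ineq (n:ℝ) a b c hm ha hb hc hp
    simp only [Prod.norm_def, Real.norm_eq_abs]
    refine max_le ?_ (max_le ?_ ?_) <;> rw [abs_le] <;> constructor <;>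
      simp only at * <;> linarith
end
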